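/- (Theorem 6.9: the trace class is a left ideal in B(H) and a two-sided *-ideal in B_ad(H).) Let T : H →L[K] H be of trace class. Then: (i) for every continuous K-linear operator B : H →L[K] H, the composition B ∘ T is of trace class; (ii) if moreover B is adjointable, then T ∘ B is of trace class; (iii) if S : H →L[K] H is an adjoint of T (⟪x, T y⟫ = ⟪S x, y⟫ for all x, y), then S is of trace class. -/

import Mathlib

open Filter

noncomputable section

variable (K : Type*) [NontriviallyNormedField K] [IsUltrametricDist K]
  [CompleteSpace K] [StarRing K] [NormedStarGroup K]

/-- The p-adic coordinate Hilbert space: zero-convergent sequences in `K` with sup norm. -/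
abbrev H := ZeroAtInftyContinuousMap ℕ K

/-- The standard basis vectors of `H K`. -/
def e (n : ℕ) : H K where
  toFun := fun m => if m = n then 1 else 0
  continuous_toFun := continuous_of_discreteTopology
  zero_at_infty' := by
    rw [cocompact_eq_atTop (α := ℕ)]
    refine Filter.Tendsto.congr' ?_ tendsto_const_nhds
    filter_upwards [Filter.eventually_gt_atTop n] with m hm
    simp [Nat.ne_of_gt hm]

/-- The canonical inner product on `H K`: `⟪x, y⟫ = ∑' i, star (x i) * y i`. -/
def inner' (x y : H K) : K := ∑' i, star (x i) * y i

/-- A bounded operator is of trace class if its matrix entries vanish along the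
cofinite filter of `ℕ × ℕ`. -/
def IsTraceClass (T : H K →L[K] H K) : Prop :=
  Tendsto (fun q : ℕ × ℕ => (T (e K q.2)) q.1) Filter.cofinite (nhds 0)

/-! Over a nonarchimedean field, an operator on `C₀(ℕ, K)` is of trace class iff its columns
`T e_j` tend to zero in norm; this is clearly preserved by composing on the left with a bounded
operator. The matrix of an adjoint is the conjugate transpose, which settles (iii). For (ii), if `B`
is adjointable then the columns `B e_j` are bounded and tend to zero coordinatewise, since their
coordinates are conjugates of the entries of the columns `B' e_k`; the ultrametric estimate
`‖T x‖ ≤ sup_k ‖x k‖ ‖T e_k‖` then forces `‖T (B e_j)‖ → 0`. -/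

open Topology ZeroAtInfty

namespace ZeroAtInftyContinuousMap

variable {α E : Type*} [TopologicalSpace α] [NormedAddCommGroup E]

lemma norm_apply_le (f : C₀(α, E)) (x : α) : ‖f x‖ ≤ ‖f‖ :=
  f.toBCF.norm_coe_le_norm x

lemma norm_le {f : C₀(α, E)} {C : ℝ} (hC : 0 ≤ C) : ‖f‖ ≤ C ↔ ∀ x, ‖f x‖ ≤ C :=
  BoundedContinuousFunction.norm_le (f := f.toBCF) hC

lemma coe_finset_sum {ι : Type*} (s : Finset ι) (f : ι → C₀(α, E)) :
    ⇑(∑ i ∈ s, f i) = ∑ i ∈ s, ⇑(f i) :=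
  map_sum (⟨⟨(⇑), coe_zero⟩, coe_add⟩ : C₀(α, E) →+ α → E) f s

instance [IsUltrametricDist E] : IsUltrametricDist C₀(α, E) :=
  IsUltrametricDist.isUltrametricDist_of_forall_norm_add_le_max_norm fun f g =>
    (norm_le (by positivity)).2 fun x => (IsUltrametricDist.norm_add_le_max _ _).trans
      (max_le_max (f.norm_apply_le x) (g.norm_apply_le x))

lemma tendsto_cofinite_zero [DiscreteTopology α] (f : C₀(α, E)) :
    Tendsto f cofinite (𝓝 0) := by
  simpa only [cocompact_eq_cofinite] using ZeroAtInftyContinuousMapClass.zero_at_infty f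

lemma tendsto_uncurry_cofinite_iff [DiscreteTopology α] {ι : Type*} (c : ι → C₀(α, E)) :
    Tendsto (fun q : α × ι => c q.2 q.1) cofinite (𝓝 0) ↔ Tendsto c cofinite (𝓝 0) := by
  simp only [NormedAddGroup.tendsto_nhds_zero, eventually_cofinite, not_lt]
  refine ⟨fun h ε hε => ?_, fun h ε hε => ?_⟩
  · refine ((h (ε / 2) (half_pos hε)).image Prod.snd).subset fun j hj => ?_
    by_contra hj'
    have hsmall : ‖c j‖ ≤ ε / 2 := (norm_le (half_pos hε).le).2 fun x =>
      (not_le.1 fun hx => hj' ⟨(x, j), hx, rfl⟩).le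
    exact (half_lt_self hε).not_ge (hj.trans hsmall)
  · have hcol : ∀ j, {x | ε ≤ ‖c j x‖}.Finite := fun j => by
      simpa only [eventually_cofinite, not_lt] using
        NormedAddGroup.tendsto_nhds_zero.1 (c j).tendsto_cofinite_zero ε hε
    refine ((h ε hε).biUnion fun j _ => (hcol j).prod (Set.finite_singleton j)).subset
      fun q hq => ?_
    by_cases hj : ε ≤ ‖c q.2‖
    · exact Set.mem_biUnion hj ⟨hq, rfl⟩
    · exact absurd (hq.trans ((c q.2).norm_apply_le q.1)) hj

end ZeroAtInftyContinuousMap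

section TraceClass

variable {𝕜 : Type*} [NontriviallyNormedField 𝕜]

lemma norm_e_le (n : ℕ) : ‖e 𝕜 n‖ ≤ 1 :=
  (ZeroAtInftyContinuousMap.norm_le zero_le_one).2 fun m => by
    simp only [e, ZeroAtInftyContinuousMap.coe_mk]
    split_ifs <;> simp

lemma sum_smul_e_apply (s : Finset ℕ) (x : H 𝕜) (m : ℕ) :
    (∑ k ∈ s, x k • e 𝕜 k) m = if m ∈ s then x m else 0 := by
  simp [ZeroAtInftyContinuousMap.coe_finset_sum, e]

lemma tendsto_sum_range_smul_e (x : H 𝕜) :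
    Tendsto (fun N => ∑ k ∈ Finset.range N, x k • e 𝕜 k) atTop (𝓝 x) := by
  refine Metric.tendsto_atTop.2 fun ε hε => ?_
  obtain ⟨N₀, hN₀⟩ := eventually_atTop.1 <| Nat.cofinite_eq_atTop ▸
    (NormedAddGroup.tendsto_nhds_zero.1 x.tendsto_cofinite_zero) (ε / 2) (half_pos hε)
  refine ⟨N₀, fun N hN => ?_⟩
  rw [dist_eq_norm]
  refine lt_of_le_of_lt ((ZeroAtInftyContinuousMap.norm_le (half_pos hε).le).2 fun m => ?_)
    (half_lt_self hε)
  rw [ZeroAtInftyContinuousMap.coe_sub, Pi.sub_apply, sum_smul_e_apply]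
  by_cases hm : m < N
  · simpa [hm] using (half_pos hε).le
  · simpa [hm] using (hN₀ m (by omega)).le

lemma norm_map_le_of_forall_norm_mul_le {F : Type*} [NormedAddCommGroup F] [NormedSpace 𝕜 F]
    [IsUltrametricDist F] (T : H 𝕜 →L[𝕜] F) {x : H 𝕜} {C : ℝ}
    (h : ∀ k, ‖x k‖ * ‖T (e 𝕜 k)‖ ≤ C) : ‖T x‖ ≤ C := by
  have hC : 0 ≤ C := (mul_nonneg (norm_nonneg _) (norm_nonneg _)).trans (h 0)
  refine le_of_tendsto ((T.continuous.tendsto x).comp (tendsto_sum_range_smul_e x)).norm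
    (Eventually.of_forall fun N => ?_)
  simp only [Function.comp_apply, map_sum, map_smul]
  exact IsUltrametricDist.norm_sum_le_of_forall_le_of_nonneg hC fun k _ =>
    (norm_smul _ _).trans_le (h k)

lemma tendsto_map_of_forall_tendsto_apply [IsUltrametricDist 𝕜] {T : H 𝕜 →L[𝕜] H 𝕜}
    (hT : Tendsto (fun k => T (e 𝕜 k)) cofinite (𝓝 0)) {ι : Type*} {l : Filter ι} {y : ι → H 𝕜}
    {M : ℝ} (hM : ∀ j, ‖y j‖ ≤ M) (hy : ∀ k, Tendsto (fun j => y j k) l (𝓝 0)) :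
    Tendsto (fun j => T (y j)) l (𝓝 0) := by
  refine NormedAddGroup.tendsto_nhds_zero.2 fun ε hε => ?_
  -- Off the finite set `S` of large columns the bound `M` suffices; on `S` the coordinates
  -- of `y j` are eventually small.
  set S := {k | ε / 2 ≤ M * ‖T (e 𝕜 k)‖}
  have hS : S.Finite := by
    simpa only [eventually_cofinite, not_lt] using
      (hT.norm.const_mul M).eventually_lt_const (u := ε / 2) (by simpa using half_pos hε)
  have hsmall : ∀ᶠ j in l, ∀ k ∈ S, ‖y j k‖ * ‖T (e 𝕜 k)‖ < ε / 2 :=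
    (eventually_all_finite hS).2 fun k _ =>
      ((hy k).norm.mul_const _).eventually_lt_const (by simpa using half_pos hε)
  filter_upwards [hsmall] with j hj
  refine (norm_map_le_of_forall_norm_mul_le T fun k => ?_).trans_lt (half_lt_self hε)
  by_cases hk : k ∈ S
  · exact (hj k hk).le
  · exact (mul_le_mul_of_nonneg_right (((y j).norm_apply_le k).trans (hM j))
      (norm_nonneg _)).trans (not_le.1 hk).le

lemma isTraceClass_iff_tendsto {T : H 𝕜 →L[𝕜] H 𝕜} :
    IsTraceClass 𝕜 T ↔ Tendsto (fun j => T (e 𝕜 j)) cofinite (𝓝 0) :=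
  ZeroAtInftyContinuousMap.tendsto_uncurry_cofinite_iff (E := 𝕜) fun j => T (e 𝕜 j)

lemma IsTraceClass.comp_left {T : H 𝕜 →L[𝕜] H 𝕜} (hT : IsTraceClass 𝕜 T) (B : H 𝕜 →L[𝕜] H 𝕜) :
    IsTraceClass 𝕜 (B ∘L T) := by
  rw [isTraceClass_iff_tendsto] at hT ⊢
  exact (B.continuous.tendsto' 0 0 (map_zero B)).comp hT

section Adjoint

variable [StarRing 𝕜]

lemma inner'_e_left (k : ℕ) (y : H 𝕜) : inner' 𝕜 (e 𝕜 k) y = y k := by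
  rw [inner', tsum_eq_single k fun i hi => by simp [e, hi]]
  simp [e]

lemma inner'_e_right (x : H 𝕜) (k : ℕ) : inner' 𝕜 x (e 𝕜 k) = star (x k) := by
  rw [inner', tsum_eq_single k fun i hi => by simp [e, hi]]
  simp [e]

lemma apply_e_eq_star_of_inner'_eq {T S : H 𝕜 →L[𝕜] H 𝕜}
    (h : ∀ x y, inner' 𝕜 x (T y) = inner' 𝕜 (S x) y) (i j : ℕ) :
    T (e 𝕜 j) i = star (S (e 𝕜 i) j) := by
  simpa only [inner'_e_left, inner'_e_right] using h (e 𝕜 i) (e 𝕜 j)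

variable [ContinuousStar 𝕜]

lemma IsTraceClass.of_inner'_eq {T S : H 𝕜 →L[𝕜] H 𝕜} (hT : IsTraceClass 𝕜 T)
    (h : ∀ x y, inner' 𝕜 x (T y) = inner' 𝕜 (S x) y) : IsTraceClass 𝕜 S := by
  have hentries : (fun q : ℕ × ℕ => S (e 𝕜 q.2) q.1) =
      star ∘ (fun q : ℕ × ℕ => T (e 𝕜 q.2) q.1) ∘ Prod.swap := by
    funext q
    simp [apply_e_eq_star_of_inner'_eq h]
  rw [IsTraceClass, hentries]
  exact (continuous_star.tendsto' 0 0 (star_zero 𝕜)).comp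
    (hT.comp Prod.swap_injective.tendsto_cofinite)

lemma IsTraceClass.comp_of_inner'_eq [IsUltrametricDist 𝕜] {T B B' : H 𝕜 →L[𝕜] H 𝕜}
    (hT : IsTraceClass 𝕜 T) (hB : ∀ x y, inner' 𝕜 x (B y) = inner' 𝕜 (B' x) y) :
    IsTraceClass 𝕜 (T ∘L B) := by
  rw [isTraceClass_iff_tendsto] at hT ⊢
  refine tendsto_map_of_forall_tendsto_apply hT (M := ‖B‖) (fun j => ?_) fun k => ?_
  · simpa using B.le_of_opNorm_le_of_le le_rfl (norm_e_le j)
  · show Tendsto (fun j => B (e 𝕜 j) k) cofinite (𝓝 0)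
    simp only [apply_e_eq_star_of_inner'_eq hB]
    exact (continuous_star.tendsto' 0 0 (star_zero 𝕜)).comp (B' (e 𝕜 k)).tendsto_cofinite_zero

end Adjoint

end TraceClass

/-- The trace class is a left ideal in `B(H)` and a two-sided `*`-ideal in `B_ad(H)`. -/
theorem stmt9 (T : H K →L[K] H K) (hT : IsTraceClass K T) :
    (∀ B : H K →L[K] H K, IsTraceClass K (B ∘L T)) ∧
    (∀ B : H K →L[K] H K,
      (∃ B' : H K →L[K] H K, ∀ x y : H K, inner' K x (B y) = inner' K (B' x) y) →
      IsTraceClass K (T ∘L B)) ∧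
    (∀ S : H K →L[K] H K, (∀ x y : H K, inner' K x (T y) = inner' K (S x) y) →
      IsTraceClass K S) :=
  ⟨hT.comp_left, fun _ ⟨_, hB⟩ => hT.comp_of_inner'_eq hB, fun _ hS => hT.of_inner'_eq hS⟩
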